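/- arXiv:1609.05565 — 2 statements merged into one kernel-verified Lean document; each statement's English description precedes it below -/
import Mathlib

section
/- Let n ≥ 2. In the root system of type B_n, the minimum, over unordered pairs {α_i, α_j} of distinct simple roots in Π, of the resonant codimension of Π ∖ {α_i, α_j} equals 4n − 4. -/
/-!
Indices run from `0`. Expanded in the simple roots, a vector `v` has coefficient
`ω_k(v) = v₀ + ⋯ + v_k` at `α_k`, so a positive root lies outside `span (Π ∖ {α_i, α_j})` exactly
when `α_i` or `α_j` occurs in it. For the pair `{α₀, α₁}` the roots avoiding both are the `(n - 2)²`
positive roots of the `B_{n-2}` living on the last `n - 2` coordinates, which leaves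
`n² - (n - 2)² = 4n - 4`. For any pair `i < j` one finds `4n - 4` roots involving `α_i` or `α_j`:
the `e_a` with `a ≤ j`, the `2n - 3` roots `e_a + e₀`, `e_a + e₁`, at least `n - 1` roots
`e_a - e_b` with `a ≤ i < b`, and at least `n - 1 - j` with `i < a ≤ j < b`.
-/

namespace TypeB

open Finset

variable {n : ℕ}

noncomputable def simpleRoot (n : ℕ) (k : Fin n) : Fin n → ℝ :=
  if h : (k : ℕ) + 1 < n then Pi.single k 1 - Pi.single ⟨(k : ℕ) + 1, h⟩ 1 else Pi.single k 1

def positiveRoots (n : ℕ) : Set (Fin n → ℝ) :=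
  {v | (∃ i j : Fin n, i < j ∧ (v = Pi.single i 1 - Pi.single j 1 ∨
    v = Pi.single i 1 + Pi.single j 1)) ∨ ∃ i : Fin n, v = Pi.single i 1}

noncomputable def resonantCodim (n : ℕ) (s : Set (Fin n → ℝ)) : ℕ :=
  {v | v ∈ positiveRoots n ∧ v ∉ Submodule.span ℝ s}.ncard

/-- The fundamental coweight `ω_k`, which reads off the coefficient of `α_k`. -/
noncomputable def coweight (k : Fin n) : (Fin n → ℝ) →ₗ[ℝ] ℝ :=
  ∑ m ∈ Iic k, LinearMap.proj m

lemma coweight_apply (k : Fin n) (v : Fin n → ℝ) : coweight k v = ∑ m ∈ Iic k, v m := by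
  simp [coweight]

lemma coweight_single (k a : Fin n) :
    coweight k (Pi.single a 1) = if a ≤ k then 1 else 0 := by
  simp [coweight_apply, Pi.single_apply]

lemma coweight_simpleRoot (k l : Fin n) :
    coweight k (simpleRoot n l) = if l = k then 1 else 0 := by
  have := k.isLt
  unfold simpleRoot
  split_ifs <;> simp only [map_sub, coweight_single] <;> split_ifs <;>
    simp only [Fin.le_def, Fin.ext_iff] at * <;> norm_num <;> omega

lemma linearIndependent_simpleRoot : LinearIndependent ℝ (simpleRoot n) := by
  rw [Fintype.linearIndependent_iff]
  intro g hg k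
  simpa [coweight_simpleRoot] using congrArg (coweight k) hg

noncomputable def simpleRootBasis (n : ℕ) : Module.Basis (Fin n) ℝ (Fin n → ℝ) :=
  basisOfLinearIndependentOfCardEqFinrank' _ linearIndependent_simpleRoot (by simp)

lemma simpleRootBasis_repr (v : Fin n → ℝ) (k : Fin n) :
    (simpleRootBasis n).repr v k = coweight k v := by
  conv_rhs => rw [← (simpleRootBasis n).sum_repr v]
  simp [simpleRootBasis, coweight_simpleRoot]

lemma mem_span_simpleRoot_diff_pair_iff (i j : Fin n) (v : Fin n → ℝ) :
    v ∈ Submodule.span ℝ (Set.range (simpleRoot n) \ {simpleRoot n i, simpleRoot n j}) ↔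
      coweight i v = 0 ∧ coweight j v = 0 := by
  have hrange : Set.range (simpleRoot n) \ {simpleRoot n i, simpleRoot n j} =
      simpleRootBasis n '' {i, j}ᶜ := by
    simp [simpleRootBasis, Set.image_pair,
      Set.image_compl_eq_range_sdiff_image linearIndependent_simpleRoot.injective]
  rw [hrange, Module.Basis.mem_span_image]
  simp only [Set.subset_def, Finset.mem_coe, Finsupp.mem_support_iff, simpleRootBasis_repr,
    Set.mem_compl_iff, Set.mem_insert_iff, Set.mem_singleton_iff]
  grind

/-- Positive roots indexed by `Fin n × Fin n`: `(a, b)` stands for `e_a - e_b` above the diagonal,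
for `e_a + e_b` below it and for `e_a` on it. -/
noncomputable def root (p : Fin n × Fin n) : Fin n → ℝ :=
  if p.1 < p.2 then Pi.single p.1 1 - Pi.single p.2 1
  else if p.2 < p.1 then Pi.single p.1 1 + Pi.single p.2 1 else Pi.single p.1 1

lemma positiveRoots_eq_range_root : positiveRoots n = Set.range root := by
  ext v
  constructor
  · rintro (⟨a, b, hab, rfl | rfl⟩ | ⟨a, rfl⟩)
    · exact ⟨(a, b), by simp [root, hab]⟩
    · exact ⟨(b, a), by simp [root, hab, hab.not_gt, add_comm]⟩
    · exact ⟨(a, a), by simp [root]⟩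
  · rintro ⟨⟨a, b⟩, rfl⟩
    rcases lt_trichotomy a b with hab | rfl | hab
    · exact .inl ⟨a, b, hab, .inl (by simp [root, hab])⟩
    · exact .inr ⟨a, by simp [root]⟩
    · exact .inl ⟨b, a, hab, .inr (by simp [root, hab, hab.not_gt, add_comm])⟩

lemma root_injective : Function.Injective (root (n := n)) := by
  rintro ⟨a, b⟩ ⟨c, d⟩ h
  simp only [root] at h
  simp only [Prod.mk.injEq]
  split_ifs at h <;>
  · have ha := congrFun h a
    have hb := congrFun h b
    have hc := congrFun h c
    have hd := congrFun h d
    simp only [Pi.add_apply, Pi.sub_apply, Pi.single_apply] at ha hb hc hd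
    grind

def Involves (k : Fin n) (p : Fin n × Fin n) : Prop :=
  min p.1 p.2 ≤ k ∧ (p.1 < p.2 → k < p.2)

instance (k : Fin n) : DecidablePred (Involves k) := fun _ => by
  unfold Involves; infer_instance

lemma coweight_root_ne_zero_iff (k : Fin n) (p : Fin n × Fin n) :
    coweight k (root p) ≠ 0 ↔ Involves k p := by
  obtain ⟨a, b⟩ := p
  simp only [Involves, root]
  split_ifs <;> simp only [map_add, map_sub, coweight_single] <;> split_ifs <;>
    simp only [Fin.le_def, Fin.lt_def, Fin.coe_min] at * <;> norm_num <;> omega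

lemma resonantCodim_range_diff_pair (i j : Fin n) :
    resonantCodim n (Set.range (simpleRoot n) \ {simpleRoot n i, simpleRoot n j}) =
      #{p | Involves i p ∨ Involves j p} := by
  have houtside : {v | v ∈ positiveRoots n ∧ v ∉ Submodule.span ℝ
      (Set.range (simpleRoot n) \ {simpleRoot n i, simpleRoot n j})} =
      root '' {p | Involves i p ∨ Involves j p} := by
    ext v
    simp only [positiveRoots_eq_range_root, mem_span_simpleRoot_diff_pair_iff,
      ← coweight_root_ne_zero_iff]
    grind
  rw [resonantCodim, houtside, Set.ncard_image_of_injective _ root_injective,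
    ← Set.ncard_coe_finset]
  simp

lemma card_involves_zero_one (m : ℕ) :
    #{p : Fin (m + 2) × Fin (m + 2) | Involves 0 p ∨ Involves 1 p} = 4 * m + 4 := by
  have hcompl : ({p | ¬(Involves 0 p ∨ Involves 1 p)} : Finset (Fin (m + 2) × Fin (m + 2))) =
      Ioi 1 ×ˢ Ioi 1 := by
    ext ⟨a, b⟩
    simp only [Involves, mem_filter, mem_univ, true_and, mem_product, mem_Ioi, Fin.le_def,
      Fin.lt_def, Fin.coe_min, Fin.val_zero, Fin.val_one]
    omega
  have hsplit := card_filter_add_card_filter_not (s := (univ : Finset (Fin (m + 2) × Fin (m + 2))))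
    fun p => Involves 0 p ∨ Involves 1 p
  rw [hcompl, card_product, Fin.card_Ioi, card_univ, Fintype.card_prod, Fintype.card_fin] at hsplit
  rw [Fin.val_one, show m + 2 - 1 - 1 = m by omega] at hsplit
  nlinarith

lemma four_mul_sub_four_le_card_involves {i j : Fin n} (hij : i < j) :
    4 * n - 4 ≤ #{p | Involves i p ∨ Involves j p} := by
  have hi : (i : ℕ) < j := hij
  have hj : (j : ℕ) < n := j.isLt
  let z₀ : Fin n := ⟨0, by omega⟩
  let z₁ : Fin n := ⟨1, by omega⟩
  let D := (Iic j).diag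
  let C₀ := Ioi z₀ ×ˢ {z₀}
  let C₁ := Ioi z₁ ×ˢ {z₁}
  let R₁ := Iic i ×ˢ Ioi i
  let R₂ := Ioc i j ×ˢ Ioi j
  have hmem : ∀ a b : Fin n, ((a, b) ∈ D ↔ a = b ∧ (a : ℕ) ≤ j) ∧
      ((a, b) ∈ C₀ ↔ (b : ℕ) = 0 ∧ 0 < (a : ℕ)) ∧ ((a, b) ∈ C₁ ↔ (b : ℕ) = 1 ∧ 1 < (a : ℕ)) ∧
      ((a, b) ∈ R₁ ↔ (a : ℕ) ≤ i ∧ (i : ℕ) < b) ∧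
      ((a, b) ∈ R₂ ↔ (i : ℕ) < a ∧ (a : ℕ) ≤ j ∧ (j : ℕ) < b) := by
    intro a b
    simp only [D, C₀, C₁, R₁, R₂, mem_diag, mem_product, mem_Iic, mem_Ioi, mem_Ioc,
      mem_singleton, Fin.le_def, Fin.lt_def, Fin.ext_iff, z₀, z₁]
    tauto
  have hsub : D ∪ C₀ ∪ C₁ ∪ R₁ ∪ R₂ ⊆ ({p | Involves i p ∨ Involves j p} : Finset _) := by
    rintro ⟨a, b⟩ hp
    simp only [mem_union, hmem, mem_filter, mem_univ, true_and, Involves, Fin.le_def,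
      Fin.lt_def, Fin.ext_iff, Fin.coe_min] at hp ⊢
    omega
  have hdisj : #(D ∪ C₀ ∪ C₁ ∪ R₁ ∪ R₂) = #D + #C₀ + #C₁ + #R₁ + #R₂ := by
    rw [card_union_of_disjoint, card_union_of_disjoint, card_union_of_disjoint,
      card_union_of_disjoint] <;>
    · rw [disjoint_left]
      rintro ⟨a, b⟩
      simp only [mem_union, hmem, Fin.ext_iff]
      omega
  have hcard := (card_le_card hsub).trans_eq' hdisj
  simp only [D, C₀, C₁, R₁, R₂, diag_card, card_product, card_singleton, Fin.card_Iic,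
    Fin.card_Ioi, Fin.card_Ioc, z₀, z₁] at hcard
  have h₁ : n - 1 ≤ (i + 1) * (n - 1 - i) := by
    have : (i : ℕ) * 1 ≤ i * (n - 1 - i) := Nat.mul_le_mul_left _ (by omega)
    rw [add_one_mul]
    omega
  have h₂ : n - 1 - j ≤ (j - i) * (n - 1 - j) := Nat.le_mul_of_pos_left _ (by omega)
  omega

end TypeB

open TypeB in
/-- In the root system of type `B_n` (`n ≥ 2`), the minimum over unordered pairs of distinct
simple roots `{α_i, α_j}` of the resonant codimension of `Π \ {α_i, α_j}` equals `4n - 4`. -/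
theorem stmt5 (n : ℕ) (hn : 2 ≤ n) :
    let e : Fin n → (Fin n → ℝ) := fun i => Pi.single i 1
    let Sp : Set (Fin n → ℝ) :=
      {v | (∃ i j : Fin n, i < j ∧ (v = e i - e j ∨ v = e i + e j)) ∨ ∃ i : Fin n, v = e i}
    let α : Fin n → (Fin n → ℝ) := fun k =>
      if h : (k : ℕ) + 1 < n then e k - e ⟨(k : ℕ) + 1, h⟩ else e k
    let rc : Set (Fin n → ℝ) → ℕ := fun Pi' =>
      Set.ncard {v | v ∈ Sp ∧ v ∉ Submodule.span ℝ Pi'}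
    (⨅ p : {p : Fin n × Fin n // p.1 ≠ p.2},
      rc (Set.range α \ {α p.val.1, α p.val.2})) = 4 * n - 4 := by
  obtain ⟨m, rfl⟩ : ∃ m, n = m + 2 := ⟨n - 2, by omega⟩
  change (⨅ p : {p : Fin (m + 2) × Fin (m + 2) // p.1 ≠ p.2}, resonantCodim (m + 2)
    (Set.range (simpleRoot (m + 2)) \ {simpleRoot _ p.1.1, simpleRoot _ p.1.2})) = _
  simp only [resonantCodim_range_diff_pair]
  have : Nonempty {p : Fin (m + 2) × Fin (m + 2) // p.1 ≠ p.2} := ⟨⟨(0, 1), by simp⟩⟩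
  refine le_antisymm ((ciInf_le' _ ⟨(0, 1), by simp⟩).trans_eq ?_)
    (le_ciInf fun ⟨⟨i, j⟩, hij⟩ => ?_)
  · rw [card_involves_zero_one]
    omega
  · rcases hij.lt_or_gt with h | h
    · exact four_mul_sub_four_le_card_involves h
    · simpa only [or_comm] using four_mul_sub_four_le_card_involves h
end

section
/- Let n ≥ 2. In the root system of type C_n, the minimum, over simple roots α_k ∈ Π (1 ≤ k ≤ n), of the resonant codimension of Π ∖ {α_k} equals 2n − 1. -/
/-!
Indices are `0`-based, so `simpleRoot 0` is `α₁`. The simple roots other than `α_k` lie in the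
kernel of the fundamental coweight `ϖ_k(x) = x₀ + ⋯ + x_k`, so every positive root with
`ϖ_k ≠ 0` lies outside their span. There are always at least `2n - 1` such roots: `e₀ + e_j` for
every `j`, and for each `j ≥ 1` either `2e_j` (if `j ≤ k`) or `e₀ - e_j` (if `j > k`). For `k = 0`
the span contains every `e_j` with `j ≥ 1`, so a root outside it must involve `e₀` with a positive
coefficient, and these are exactly the `2n - 1` roots just listed.
-/

open Function Set Submodule

noncomputable def resonantCodim (R : Type*) {V : Type*} [Semiring R] [AddCommMonoid V]
    [Module R V] (Φ s : Set V) : ℕ :=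
  (Φ \ span R s).ncard

section

variable {R V ι : Type*} [Semiring R] [AddCommMonoid V] [Module R V] {Φ s : Set V}

lemma le_resonantCodim_of_injective (f : V →ₗ[R] R) (hf : ∀ x ∈ s, f x = 0) (hΦ : Φ.Finite)
    {g : ι → V} (hg : Injective g) (hgΦ : ∀ i, g i ∈ Φ) (hgf : ∀ i, f (g i) ≠ 0) :
    Nat.card ι ≤ resonantCodim R Φ s := by
  have hspan : span R s ≤ LinearMap.ker f := span_le.2 hf
  rw [← ncard_range_of_injective hg]
  refine ncard_le_ncard ?_ hΦ.sdiff
  rintro _ ⟨i, rfl⟩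
  exact ⟨hgΦ i, fun hi => hgf i (hspan hi)⟩

lemma resonantCodim_le_of_subset_range [Finite ι] {g : ι → V} (h : Φ \ span R s ⊆ range g) :
    resonantCodim R Φ s ≤ Nat.card ι :=
  (ncard_le_ncard h (finite_range g)).trans (Finite.card_range_le g)

end

namespace TypeC

variable {n : ℕ}

def positiveRoots (n : ℕ) : Set (Fin n → ℝ) :=
  {v | (∃ i j : Fin n, i < j ∧
      (v = Pi.single i 1 - Pi.single j 1 ∨ v = Pi.single i 1 + Pi.single j 1)) ∨
    ∃ i : Fin n, v = (2 : ℝ) • Pi.single i 1}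

noncomputable def simpleRoot (k : Fin n) : Fin n → ℝ :=
  if h : (k : ℕ) + 1 < n then Pi.single k 1 - Pi.single ⟨(k : ℕ) + 1, h⟩ 1
  else (2 : ℝ) • Pi.single k 1

lemma simpleRoot_of_lt {k : Fin n} (h : (k : ℕ) + 1 < n) :
    simpleRoot k = Pi.single k 1 - Pi.single ⟨(k : ℕ) + 1, h⟩ 1 :=
  dif_pos h

lemma simpleRoot_of_not_lt {k : Fin n} (h : ¬(k : ℕ) + 1 < n) :
    simpleRoot k = (2 : ℝ) • Pi.single k 1 :=
  dif_neg h

lemma positiveRoots_finite : (positiveRoots n).Finite := by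
  refine (((finite_range fun p : Fin n × Fin n => Pi.single p.1 (1 : ℝ) - Pi.single p.2 1).union
    (finite_range fun p : Fin n × Fin n => Pi.single p.1 (1 : ℝ) + Pi.single p.2 1)).union
    (finite_range fun i : Fin n => (2 : ℝ) • Pi.single i (1 : ℝ))).subset ?_
  rintro v (⟨i, j, -, rfl | rfl⟩ | ⟨i, rfl⟩)
  exacts [.inl (.inl ⟨(i, j), rfl⟩), .inl (.inr ⟨(i, j), rfl⟩), .inr ⟨i, rfl⟩]

lemma simpleRoot_apply_of_lt {i k : Fin n} (h : i < k) : simpleRoot k i = 0 := by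
  have h' : (i : ℕ) ≠ k + 1 := by omega
  unfold simpleRoot
  split_ifs <;> simp [h.ne, Fin.ext_iff, h']

lemma simpleRoot_apply_self_ne_zero (k : Fin n) : simpleRoot k k ≠ 0 := by
  unfold simpleRoot
  split_ifs <;> simp [Fin.ext_iff]

lemma simpleRoot_injective : Injective (simpleRoot (n := n)) := by
  intro i j h
  by_contra hij
  rcases lt_or_gt_of_ne hij with hlt | hlt
  · exact simpleRoot_apply_self_ne_zero i (by rw [h, simpleRoot_apply_of_lt hlt])
  · exact simpleRoot_apply_self_ne_zero j (by rw [← h, simpleRoot_apply_of_lt hlt])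

lemma single_mem_span_of_lt {k j : Fin n} (hkj : k < j) :
    Pi.single j (1 : ℝ) ∈ span ℝ (range simpleRoot \ {simpleRoot k}) := by
  have hα : simpleRoot j ∈ span ℝ (range simpleRoot \ {simpleRoot k}) :=
    subset_span ⟨⟨j, rfl⟩, simpleRoot_injective.ne hkj.ne'⟩
  by_cases h : (j : ℕ) + 1 < n
  · have ih := single_mem_span_of_lt (k := k) (j := ⟨j + 1, h⟩) (Nat.lt_succ_of_lt hkj)
    rw [simpleRoot_of_lt h] at hα
    simpa using add_mem hα ih
  · rw [simpleRoot_of_not_lt h] at hα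
    simpa [smul_smul] using smul_mem _ (1 / 2 : ℝ) hα
termination_by n - j

noncomputable def coweight (k : Fin n) : (Fin n → ℝ) →ₗ[ℝ] ℝ :=
  ∑ i ∈ Finset.Iic k, LinearMap.proj i

lemma coweight_single (k j : Fin n) :
    coweight k (Pi.single j 1) = if j ≤ k then 1 else 0 := by
  simp [coweight, Finset.sum_pi_single']

lemma coweight_simpleRoot {j k : Fin n} (hjk : j ≠ k) : coweight k (simpleRoot j) = 0 := by
  by_cases h : (j : ℕ) + 1 < n
  · have : j ≤ k ↔ (⟨j + 1, h⟩ : Fin n) ≤ k := by simp only [Fin.le_def]; omega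
    simp [simpleRoot_of_lt h, coweight_single, this]
  · have : ¬j ≤ k := by omega
    simp [simpleRoot_of_not_lt h, coweight_single, this]

variable [NeZero n]

noncomputable def outsideRoot (k : Fin n) : Fin n ⊕ {j : Fin n // j ≠ 0} → Fin n → ℝ
  | .inl j => Pi.single 0 1 + Pi.single j 1
  | .inr j => if j.1 ≤ k then (2 : ℝ) • Pi.single j.1 1 else Pi.single 0 1 - Pi.single j.1 1

lemma outsideRoot_mem (k : Fin n) (x) : outsideRoot k x ∈ positiveRoots n := by
  rcases x with j | ⟨j, hj⟩
  · by_cases hj : j = 0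
    · exact .inr ⟨0, by simp [outsideRoot, hj, two_smul]⟩
    · exact .inl ⟨0, j, Fin.pos_iff_ne_zero.2 hj, .inr rfl⟩
  · by_cases hjk : j ≤ k
    · exact .inr ⟨j, by simp [outsideRoot, hjk]⟩
    · exact .inl ⟨0, j, Fin.pos_iff_ne_zero.2 hj, .inl (by simp [outsideRoot, hjk])⟩

lemma coweight_outsideRoot_ne_zero (k : Fin n) (x) : coweight k (outsideRoot k x) ≠ 0 := by
  rcases x with j | ⟨j, hj⟩
  · simp only [outsideRoot, map_add, coweight_single, Fin.zero_le, if_true]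
    split_ifs <;> norm_num
  · by_cases hjk : j ≤ k <;> simp [outsideRoot, hjk, coweight_single]

lemma outsideRoot_injective (k : Fin n) : Injective (outsideRoot k) := by
  -- Coordinate `j` of `outsideRoot k (.inr j)` is `2` or `-1`, of any other member `0` or `1`.
  have eq_inr : ∀ j x, outsideRoot k x = outsideRoot k (.inr j) → x = .inr j := by
    rintro ⟨j, hj⟩ x h
    have hcoord := congrFun h j
    rcases x with i | ⟨i, hi⟩
    · by_cases hjk : j ≤ k <;> by_cases hij : i = j <;>
        norm_num [outsideRoot, Pi.single_apply, hj, hjk, hij] at hcoord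
    · by_contra hne
      have hij : j ≠ i := fun hij => hne (by subst hij; rfl)
      by_cases hjk : j ≤ k <;> by_cases hik : i ≤ k <;>
        simp [outsideRoot, hj, hjk, hik, hij] at hcoord
  rintro (i | i) (j | j) h
  · simpa [Pi.single_apply, eq_comm] using congrFun (add_left_cancel h) j
  · exact eq_inr _ _ h
  · exact (eq_inr _ _ h.symm).symm
  · exact eq_inr _ _ h

lemma card_outsideRoot_index : Nat.card (Fin n ⊕ {j : Fin n // j ≠ 0}) = 2 * n - 1 := by
  have := NeZero.pos n
  simp [Nat.card_eq_fintype_card, Fintype.card_subtype_compl]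
  omega

lemma diff_span_subset_range_outsideRoot :
    positiveRoots n \ (span ℝ (range simpleRoot \ {simpleRoot (0 : Fin n)}) : Set (Fin n → ℝ)) ⊆
      range (outsideRoot 0) := by
  have hspan : ∀ i : Fin n, i ≠ 0 →
      Pi.single i (1 : ℝ) ∈ span ℝ (range simpleRoot \ {simpleRoot 0}) :=
    fun i hi => single_mem_span_of_lt (Fin.pos_iff_ne_zero.2 hi)
  rintro v ⟨⟨i, j, hij, rfl | rfl⟩ | ⟨i, rfl⟩, hv⟩ <;> obtain rfl | hi := eq_or_ne i 0
  · exact ⟨.inr ⟨j, hij.ne'⟩, by simp [outsideRoot, hij.not_ge]⟩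
  · exact absurd (sub_mem (hspan i hi) (hspan j (ne_bot_of_gt hij))) hv
  · exact ⟨.inl j, rfl⟩
  · exact absurd (add_mem (hspan i hi) (hspan j (ne_bot_of_gt hij))) hv
  · exact ⟨.inl 0, by simp [outsideRoot, two_smul]⟩
  · exact absurd (Submodule.smul_mem _ 2 (hspan i hi)) hv

lemma le_resonantCodim (k : Fin n) :
    2 * n - 1 ≤ resonantCodim ℝ (positiveRoots n) (range simpleRoot \ {simpleRoot k}) := by
  rw [← card_outsideRoot_index]
  refine le_resonantCodim_of_injective (coweight k) ?_ positiveRoots_finite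
    (outsideRoot_injective k) (outsideRoot_mem k) (coweight_outsideRoot_ne_zero k)
  rintro _ ⟨⟨j, rfl⟩, hne⟩
  exact coweight_simpleRoot (by rintro rfl; exact hne rfl)

lemma resonantCodim_zero_le :
    resonantCodim ℝ (positiveRoots n) (range simpleRoot \ {simpleRoot 0}) ≤ 2 * n - 1 :=
  card_outsideRoot_index (n := n) ▸
    resonantCodim_le_of_subset_range diff_span_subset_range_outsideRoot

end TypeC

open TypeC in
/-- In the root system of type `C_n` (`n ≥ 2`), the minimum over simple roots `α_k` of the
resonant codimension of `Π \ {α_k}` equals `2n - 1`. -/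
theorem stmt6 (n : ℕ) (hn : 2 ≤ n) :
    let e : Fin n → (Fin n → ℝ) := fun i => Pi.single i 1
    let Sp : Set (Fin n → ℝ) :=
      {v | (∃ i j : Fin n, i < j ∧ (v = e i - e j ∨ v = e i + e j)) ∨
        ∃ i : Fin n, v = (2 : ℝ) • e i}
    let α : Fin n → (Fin n → ℝ) := fun k =>
      if h : (k : ℕ) + 1 < n then e k - e ⟨(k : ℕ) + 1, h⟩ else (2 : ℝ) • e k
    let rc : Set (Fin n → ℝ) → ℕ := fun Pi' =>
      Set.ncard {v | v ∈ Sp ∧ v ∉ Submodule.span ℝ Pi'}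
    (⨅ k : Fin n, rc (Set.range α \ {α k})) = 2 * n - 1 := by
  intro e Sp α rc
  have : NeZero n := ⟨by omega⟩
  change ⨅ k, resonantCodim ℝ (positiveRoots n) (range simpleRoot \ {simpleRoot k}) = 2 * n - 1
  exact le_antisymm ((ciInf_le (OrderBot.bddBelow _) 0).trans resonantCodim_zero_le)
    (le_ciInf le_resonantCodim)
end
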